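/- arXiv:2507.12613 — 3 statements merged into one kernel-verified Lean document; each statement's English description precedes it below -/
import Mathlib

section
/- In the model graph G, every edge joining two triangle-vertices T and T′ is contained in exactly two triangles of G: the common neighbours of T and T′ are exactly the dual vertices x̃ and ỹ, where {x, y} = T ∩ T′. -/
/-- Adjacency relation of the Farey graph on `Option ℚ`: `some x` and `some y` are
adjacent iff `|x.num * y.den - y.num * x.den| = 1`, and `none` (representing `∞`)
is adjacent to `some x` iff `x.den = 1`. -/
def fareyAdj : Option ℚ → Option ℚ → Prop
  | some x, some y => |x.num * (y.den : ℤ) - y.num * (x.den : ℤ)| = 1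
  | some x, none => x.den = 1
  | none, some x => x.den = 1
  | none, none => False

/-- The Farey graph `𝔽` on the vertex set `Option ℚ`. -/
def fareyGraph : SimpleGraph (Option ℚ) where
  Adj := fareyAdj
  symm := by
    constructor
    rintro (_ | x) (_ | y) h
    · exact h.elim
    · exact h
    · exact h
    · show |y.num * (x.den : ℤ) - x.num * (y.den : ℤ)| = 1
      rw [abs_sub_comm]
      exact h
  loopless := by
    constructor
    rintro (_ | x) h
    · exact h.elim
    · have : |x.num * (x.den : ℤ) - x.num * (x.den : ℤ)| = 1 := h
      simp at this

/-- A triangle of the Farey graph: a 3-element clique. -/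
def FareyTriangle : Type := {s : Finset (Option ℚ) // fareyGraph.IsNClique 3 s}

/-- The Farey dual graph `𝔽*`: vertices are the triangles of the Farey graph, two
triangles being adjacent iff they are distinct and share exactly two vertices. -/
def fareyDual : SimpleGraph FareyTriangle where
  Adj T T' := T ≠ T' ∧ (T.1 ∩ T'.1).card = 2
  symm := by
    constructor
    rintro T T' ⟨h1, h2⟩
    exact ⟨h1.symm, by rwa [Finset.inter_comm]⟩
  loopless := ⟨fun T h => h.1 rfl⟩

/-- Vertices of the model graph: Farey vertices `.inl x`, dual vertices
`.inr (.inl x)` (written `x̃`), and triangle-vertices `.inr (.inr T)`. -/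
abbrev ModelVertex : Type := Option ℚ ⊕ (Option ℚ ⊕ FareyTriangle)

/-- Adjacency relation of the model graph `G`. -/
def modelAdj : ModelVertex → ModelVertex → Prop
  | .inl x, .inl y => fareyGraph.Adj x y
  | .inl x, .inr (.inl y) => x = y
  | .inr (.inl x), .inl y => x = y
  | .inr (.inl x), .inr (.inr T) => x ∈ T.1
  | .inr (.inr T), .inr (.inl x) => x ∈ T.1
  | .inr (.inr T), .inr (.inr T') => T ≠ T' ∧ (T.1 ∩ T'.1).card = 2
  | _, _ => False

/-- The model graph `G` of the pants graph of `N₃`: on `V(𝔽) ⊔ V(𝔽) ⊔ T(𝔽)`, with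
edges `x—y` for `x, y` adjacent in `𝔽`, `x̃—x`, `x̃—T` whenever `x ∈ T`, and `T—T'`
whenever `T ≠ T'` and `|T ∩ T'| = 2`. -/
def modelGraph : SimpleGraph ModelVertex where
  Adj := modelAdj
  symm := by
    constructor
    rintro (x | x | T) (y | y | T') h
    · exact fareyGraph.adj_symm h
    · exact h.symm
    · exact h.elim
    · exact h.symm
    · exact h.elim
    · exact h
    · exact h.elim
    · exact h
    · exact ⟨h.1.symm, by
        have := h.2
        rwa [Finset.inter_comm]⟩
  loopless := by
    constructor
    rintro (x | x | T) h
    · exact fareyGraph.irrefl h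
    · exact h.elim
    · exact h.1 rfl

/-! Write `v(p/q) = (p, q)` in lowest terms with `q > 0`, `v(∞) = (1, 0)` and
`[u w] = det(v u, v w)`, so that Farey adjacency is `|[u w]| = 1`. For a Farey edge `xy` with
common neighbours `z, z'` the Plücker relation `[z z'][x y] = [z x][z' y] - [z y][z' x]` shows
that `[z z']` is even, so `z` and `z'` are not adjacent and `𝔽` has no `K₄`; it also shows that
`z ↦ [z x][z y] ∈ {±1}` is injective, so an edge has at most two common neighbours.
In such a graph three distinct triangles cannot pairwise share an edge: either they all contain
the same edge, whose three third vertices are then distinct common neighbours of it, or together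
they span a `K₄`. Hence `𝔽*` is triangle-free, and a common neighbour of `T` and `T'` in `G` is a
dual vertex `x̃` with `x ∈ T ∩ T'`. -/

open Finset in
theorem Finset.mem_of_card_triple_inter_eq_two {V : Type*} [DecidableEq V] {x y c : V}
    {t : Finset V} (h : #({x, y, c} ∩ t) = 2) (hx : x ∉ t) : c ∈ t := by
  by_contra hc
  have hsub : {x, y, c} ∩ t ⊆ {y} := by
    intro a
    simp only [mem_inter, mem_insert, mem_singleton]
    rintro ⟨rfl | rfl | rfl, ha⟩ <;> simp_all
  simpa [h] using card_le_card hsub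

namespace SimpleGraph

open Finset

variable {V : Type*} [DecidableEq V] {G : SimpleGraph V}

theorem IsNClique.exists_eq_triple {s : Finset V} (hs : G.IsNClique 3 s) {x y : V}
    (hx : x ∈ s) (hy : y ∈ s) (hxy : x ≠ y) :
    ∃ c ∈ G.commonNeighbors x y, s = {x, y, c} := by
  have hxys : {x, y} ⊆ s := insert_subset hx (singleton_subset_iff.mpr hy)
  obtain ⟨c, hc⟩ : ∃ c, s \ {x, y} = {c} := by
    rw [← card_eq_one, card_sdiff_of_subset hxys, hs.card_eq, card_pair hxy]
  have hcs : c ∈ s \ {x, y} := hc ▸ mem_singleton_self c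
  simp only [mem_sdiff, mem_insert, mem_singleton, not_or] at hcs
  refine ⟨c, ⟨hs.1 hx hcs.1 (Ne.symm hcs.2.1), hs.1 hy hcs.1 (Ne.symm hcs.2.2)⟩, ?_⟩
  rw [← union_sdiff_of_subset hxys, hc, insert_union, singleton_union]

theorem not_adj_of_mem_commonNeighbors (h4 : G.CliqueFree 4) {x y c c' : V} (hxy : G.Adj x y)
    (hc : c ∈ G.commonNeighbors x y) (hc' : c' ∈ G.commonNeighbors x y) : ¬ G.Adj c c' := by
  intro hcc'
  rw [mem_commonNeighbors] at hc hc'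
  have hxyc' : G.IsNClique 3 {x, y, c'} := is3Clique_triple_iff.mpr ⟨hxy, hc'.1, hc'.2⟩
  refine (hxyc'.insert (a := c) ?_).not_cliqueFree h4
  simp only [mem_insert, mem_singleton, forall_eq_or_imp, forall_eq]
  exact ⟨hc.1.symm, hc.2.symm, hcc'⟩

theorem eq_or_eq_or_eq_of_card_inter_eq_two (h4 : G.CliqueFree 4)
    (hcn : ∀ ⦃x y⦄, G.Adj x y → (G.commonNeighbors x y).encard ≤ 2)
    {R S T : Finset V} (hR : G.IsNClique 3 R) (hS : G.IsNClique 3 S) (hT : G.IsNClique 3 T)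
    (hRS : #(R ∩ S) = 2) (hRT : #(R ∩ T) = 2) (hST : #(S ∩ T) = 2) :
    R = S ∨ R = T ∨ S = T := by
  obtain ⟨x, y, hxy, hRSxy⟩ := card_eq_two.mp hRS
  have hx : x ∈ R ∩ S := by simp [hRSxy]
  have hy : y ∈ R ∩ S := by simp [hRSxy]
  rw [mem_inter] at hx hy
  have hxy' : G.Adj x y := hR.1 hx.1 hy.1 hxy
  obtain ⟨c, hc, rfl⟩ := hR.exists_eq_triple hx.1 hy.1 hxy
  obtain ⟨c', hc', rfl⟩ := hS.exists_eq_triple hx.2 hy.2 hxy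
  by_contra! ⟨hRS', hRT', hST'⟩
  have hcc' : c ≠ c' := by rintro rfl; exact hRS' rfl
  by_cases hxyT : x ∈ T ∧ y ∈ T
  · obtain ⟨c'', hc'', rfl⟩ := hT.exists_eq_triple hxyT.1 hxyT.2 hxy
    have hcc'' : c ≠ c'' := by rintro rfl; exact hRT' rfl
    have hc'c'' : c' ≠ c'' := by rintro rfl; exact hST' rfl
    have hsub : ({c, c', c''} : Set V) ⊆ G.commonNeighbors x y := by
      simp [Set.insert_subset_iff, hc, hc', hc'']
    have h3 := (Set.encard_le_encard hsub).trans (hcn hxy')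
    rw [Set.encard_eq_three.mpr ⟨c, c', c'', hcc', hcc'', hc'c'', rfl⟩] at h3
    exact absurd h3 (by decide)
  · have hcT : c ∈ T ∧ c' ∈ T := by
      rcases not_and_or.mp hxyT with hxT | hyT
      · exact ⟨mem_of_card_triple_inter_eq_two hRT hxT,
          mem_of_card_triple_inter_eq_two hST hxT⟩
      · rw [insert_comm] at hRT hST
        exact ⟨mem_of_card_triple_inter_eq_two hRT hyT,
          mem_of_card_triple_inter_eq_two hST hyT⟩
    exact not_adj_of_mem_commonNeighbors h4 hxy' hc hc' (hT.1 hcT.1 hcT.2 hcc')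

end SimpleGraph

def fareyVec : Option ℚ → ℤ × ℤ
  | none => (1, 0)
  | some r => (r.num, r.den)

def fareyDet (u v : Option ℚ) : ℤ :=
  (fareyVec u).1 * (fareyVec v).2 - (fareyVec v).1 * (fareyVec u).2

theorem fareyGraph_adj_iff {u v : Option ℚ} : fareyGraph.Adj u v ↔ |fareyDet u v| = 1 := by
  cases u <;> cases v <;> simp [fareyGraph, fareyAdj, fareyDet, fareyVec]

theorem eq_of_fareyDet_eq_zero {u v : Option ℚ} (h : fareyDet u v = 0) : u = v := by
  rcases u with _ | r <;> rcases v with _ | s <;> simp [fareyDet, fareyVec] at h ⊢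
  exact Rat.eq_iff_mul_eq_mul.mpr (sub_eq_zero.mp h)

theorem fareyDet_mul_fareyDet (x y z z' : Option ℚ) :
    fareyDet z z' * fareyDet x y = fareyDet z x * fareyDet z' y - fareyDet z y * fareyDet z' x := by
  unfold fareyDet; ring

theorem fareyDet_eq_one_or_eq_neg_one_of_adj {u v : Option ℚ} (h : fareyGraph.Adj u v) :
    fareyDet u v = 1 ∨ fareyDet u v = -1 :=
  (abs_eq zero_le_one).mp (fareyGraph_adj_iff.mp h)

theorem odd_fareyDet_of_adj {u v : Option ℚ} (h : fareyGraph.Adj u v) : Odd (fareyDet u v) := by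
  rcases fareyDet_eq_one_or_eq_neg_one_of_adj h with h | h <;> rw [h] <;> decide

theorem fareyDet_mul_self_of_adj {u v : Option ℚ} (h : fareyGraph.Adj u v) :
    fareyDet u v * fareyDet u v = 1 := by
  rcases fareyDet_eq_one_or_eq_neg_one_of_adj h with h | h <;> rw [h] <;> rfl

theorem fareyGraph_not_adj_of_mem_commonNeighbors {x y z z' : Option ℚ} (hxy : fareyGraph.Adj x y)
    (hz : z ∈ fareyGraph.commonNeighbors x y) (hz' : z' ∈ fareyGraph.commonNeighbors x y) :
    ¬ fareyGraph.Adj z z' := by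
  intro hzz'
  rw [SimpleGraph.mem_commonNeighbors] at hz hz'
  have hodd := (odd_fareyDet_of_adj hzz').mul (odd_fareyDet_of_adj hxy)
  have heven : Even (fareyDet z x * fareyDet z' y - fareyDet z y * fareyDet z' x) :=
    ((odd_fareyDet_of_adj hz.1.symm).mul (odd_fareyDet_of_adj hz'.2.symm)).sub_odd
      ((odd_fareyDet_of_adj hz.2.symm).mul (odd_fareyDet_of_adj hz'.1.symm))
  rw [← fareyDet_mul_fareyDet] at heven
  exact Int.not_even_iff_odd.mpr hodd heven

theorem fareyGraph_encard_commonNeighbors_le_two {x y : Option ℚ} (hxy : fareyGraph.Adj x y) :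
    (fareyGraph.commonNeighbors x y).encard ≤ 2 := by
  let sign z := fareyDet z x * fareyDet z y
  have hsign : Set.MapsTo sign (fareyGraph.commonNeighbors x y) {1, -1} := by
    intro z hz
    rw [SimpleGraph.mem_commonNeighbors] at hz
    rcases fareyDet_eq_one_or_eq_neg_one_of_adj hz.1.symm with h | h <;>
      rcases fareyDet_eq_one_or_eq_neg_one_of_adj hz.2.symm with h' | h' <;> simp [sign, h, h']
  have hinj : Set.InjOn sign (fareyGraph.commonNeighbors x y) := by
    intro z hz z' hz' hzz'
    rw [SimpleGraph.mem_commonNeighbors] at hz hz'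
    -- with `s = [z x]`, `t = [z y]` etc.: `s t' - s' t = t t' (s t - s' t')` as `t² = t'² = 1`
    have hdet : fareyDet z z' * fareyDet x y = 0 := by
      linear_combination fareyDet_mul_fareyDet x y z z' + fareyDet z y * fareyDet z' y * hzz'
        - fareyDet z x * fareyDet z' y * fareyDet_mul_self_of_adj hz.2.symm
        + fareyDet z' x * fareyDet z y * fareyDet_mul_self_of_adj hz'.2.symm
    exact eq_of_fareyDet_eq_zero ((mul_eq_zero.mp hdet).resolve_right
      fun h0 => by simpa [h0] using odd_fareyDet_of_adj hxy)
  calc _ ≤ ({1, -1} : Set ℤ).encard := Set.encard_le_encard_of_injOn hsign hinj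
    _ = 2 := Set.encard_pair (by decide)

theorem fareyGraph_cliqueFree_four : fareyGraph.CliqueFree 4 := by
  classical
  intro s hs
  obtain ⟨a, t, hat, rfl, ht⟩ := Finset.card_eq_succ.mp hs.card_eq
  obtain ⟨x, y, c, hxy, hxc, hyc, rfl⟩ :=
    SimpleGraph.is3Clique_iff.mp ⟨hs.1.subset (by simp), ht⟩
  have ha : ∀ b ∈ ({x, y, c} : Finset (Option ℚ)), fareyGraph.Adj a b := fun b hb =>
    hs.1 (Finset.mem_insert_self a _) (Finset.mem_insert_of_mem hb)
      (ne_of_mem_of_not_mem hb hat).symm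
  exact fareyGraph_not_adj_of_mem_commonNeighbors hxy
    ⟨(ha x (by simp)).symm, (ha y (by simp)).symm⟩ ⟨hxc, hyc⟩ (ha c (by simp))

theorem fareyDual_cliqueFree_three : fareyDual.CliqueFree 3 := by
  classical
  intro s hs
  obtain ⟨R, S, T, hRS, hRT, hST, -⟩ := SimpleGraph.is3Clique_iff.mp hs
  rcases SimpleGraph.eq_or_eq_or_eq_of_card_inter_eq_two fareyGraph_cliqueFree_four
      (fun _ _ => fareyGraph_encard_commonNeighbors_le_two) R.2 S.2 T.2 hRS.2 hRT.2 hST.2 with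
    h | h | h
  · exact hRS.1 (Subtype.ext h)
  · exact hRT.1 (Subtype.ext h)
  · exact hST.1 (Subtype.ext h)

/-- In the model graph `G`, every edge joining two triangle-vertices `T` and `T'`
is contained in exactly two triangles of `G`: the common neighbours of `T` and `T'`
are exactly the dual vertices `x̃` with `x ∈ T ∩ T'` (and there are two of them,
since `T ∩ T'` consists of exactly two vertices). -/
theorem modelGraph_triangle_triangle_edge_common_neighbours
    (T T' : FareyTriangle)
    (h : modelGraph.Adj (.inr (.inr T)) (.inr (.inr T'))) :
    {w : ModelVertex | modelGraph.Adj (.inr (.inr T)) w ∧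
        modelGraph.Adj (.inr (.inr T')) w} =
      (fun x => (Sum.inr (Sum.inl x) : ModelVertex)) '' ↑(T.1 ∩ T'.1) ∧
    {w : ModelVertex | modelGraph.Adj (.inr (.inr T)) w ∧
        modelGraph.Adj (.inr (.inr T')) w}.ncard = 2 := by
  classical
  have hcommon : {w : ModelVertex | modelGraph.Adj (.inr (.inr T)) w ∧
      modelGraph.Adj (.inr (.inr T')) w} =
      (fun x => (Sum.inr (Sum.inl x) : ModelVertex)) '' ↑(T.1 ∩ T'.1) := by
    ext (x | x | S)
    · simp [modelGraph, modelAdj]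
    · simp [modelGraph, modelAdj]
    · refine iff_of_false (fun ⟨hS, hS'⟩ => ?_) (by simp)
      exact fareyDual_cliqueFree_three _ (SimpleGraph.is3Clique_triple_iff.mpr ⟨h, hS, hS'⟩)
  refine ⟨hcommon, ?_⟩
  rw [hcommon, Set.ncard_image_of_injective _ fun _ _ => by simp, Set.ncard_coe_finset]
  exact h.2
end

section
/- Every graph automorphism of the model graph G preserves its three classes of vertices: it maps Farey vertices to Farey vertices, dual vertices to dual vertices, and triangle-vertices to triangle-vertices. -/
/-!
The vertices `x` and `x̃` are exactly the endpoints of the edges of `G` that lie in no triangle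
(the edges `x — x̃`): every edge at a triangle-vertex `T` lies in a triangle, because every Farey
edge bounds two Farey triangles. Among these endpoints, Farey vertices are those all of whose
neighbours are again such endpoints, whereas `x̃` is adjacent to a triangle containing `x`.
Both properties are invariant under automorphisms.

The Farey facts come from writing the vertices as primitive vectors of `ℤ²` (`∞` as `(1, 0)`),
adjacency being `det = ±1`: then the common neighbours of `u` and `v` are `u + v` and `u - v`.
-/

namespace Farey

def cross (v w : ℤ × ℤ) : ℤ := v.1 * w.2 - w.1 * v.2

def ofVec (v : ℤ × ℤ) : Option ℚ := if v.2 = 0 then none else some (v.1 / v.2)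

def vec : Option ℚ → ℤ × ℤ
  | none => (1, 0)
  | some x => (x.num, x.den)

lemma cross_neg_left (v w : ℤ × ℤ) : cross (-v) w = -cross v w := by
  simp only [cross, Prod.fst_neg, Prod.snd_neg]; ring

lemma cross_neg_right (v w : ℤ × ℤ) : cross v (-w) = -cross v w := by
  simp only [cross, Prod.fst_neg, Prod.snd_neg]; ring

lemma cross_comm (v w : ℤ × ℤ) : cross w v = -cross v w := by
  simp only [cross]; ring

lemma ofVec_vec (x : Option ℚ) : ofVec (vec x) = x := by
  cases x with
  | none => simp [ofVec, vec]
  | some x => simp [ofVec, vec, Rat.num_div_den]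

lemma ofVec_neg (v : ℤ × ℤ) : ofVec (-v) = ofVec v := by
  simp [ofVec, neg_div_neg_eq]

lemma isCoprime_vec (x : Option ℚ) : IsCoprime (vec x).1 (vec x).2 := by
  cases x with
  | none => exact isCoprime_one_left
  | some x => exact Rat.isCoprime_num_den x

lemma isCoprime_of_abs_cross_eq_one {v w : ℤ × ℤ} (h : |cross v w| = 1) :
    IsCoprime v.1 v.2 := by
  rcases abs_eq zero_le_one |>.mp h with h | h
  · exact ⟨w.2, -w.1, by rw [cross] at h; linarith⟩
  · exact ⟨-w.2, w.1, by rw [cross] at h; linarith⟩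

lemma vec_ofVec_of_pos {v : ℤ × ℤ} (hv : IsCoprime v.1 v.2) (hpos : 0 < v.2) :
    vec (ofVec v) = v := by
  have hcop : Nat.Coprime v.1.natAbs v.2.natAbs := Int.isCoprime_iff_gcd_eq_one.mp hv
  simp only [ofVec, hpos.ne', if_false, vec, Rat.num_div_eq_of_coprime hpos hcop,
    Rat.den_div_eq_of_coprime hpos hcop]

lemma vec_ofVec {v : ℤ × ℤ} (hv : IsCoprime v.1 v.2) :
    vec (ofVec v) = v ∨ vec (ofVec v) = -v := by
  rcases lt_trichotomy v.2 0 with hneg | hzero | hpos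
  · right
    have hv' : IsCoprime (-v).1 (-v).2 := hv.neg_neg
    rw [← ofVec_neg, vec_ofVec_of_pos hv' (by simpa using hneg)]
  · have hunit : IsUnit v.1 := isCoprime_zero_right.mp (hzero ▸ hv)
    rcases Int.isUnit_iff.mp hunit with h1 | h1 <;>
      simp [ofVec, vec, hzero, h1, Prod.ext_iff]
  · exact Or.inl (vec_ofVec_of_pos hv hpos)

lemma fareyGraph_adj_iff {x y : Option ℚ} :
    fareyGraph.Adj x y ↔ |cross (vec x) (vec y)| = 1 := by
  cases x <;> cases y <;> simp [fareyGraph, fareyAdj, cross, vec]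

lemma adj_ofVec {v w : ℤ × ℤ} (h : |cross v w| = 1) : fareyGraph.Adj (ofVec v) (ofVec w) := by
  have hw : |cross w v| = 1 := by rwa [cross_comm, abs_neg]
  rw [fareyGraph_adj_iff]
  rcases vec_ofVec (isCoprime_of_abs_cross_eq_one h) with hv' | hv' <;>
    rcases vec_ofVec (isCoprime_of_abs_cross_eq_one hw) with hw' | hw' <;>
    simpa [hv', hw', cross_neg_left, cross_neg_right] using h

lemma cross_eq_zero_of_ofVec_eq {v w : ℤ × ℤ} (h : ofVec v = ofVec w) : cross v w = 0 := by
  unfold ofVec at h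
  split_ifs at h with hv hw hw
  · simp [cross, hv, hw]
  · rw [Option.some_inj, div_eq_div_iff (by exact_mod_cast hv) (by exact_mod_cast hw)] at h
    exact sub_eq_zero.mpr (by exact_mod_cast h)

lemma exists_adj (x : Option ℚ) : ∃ y, fareyGraph.Adj x y := by
  obtain ⟨a, b, hab⟩ := isCoprime_vec x
  refine ⟨ofVec (-b, a), ?_⟩
  have hcross : cross (vec x) (-b, a) = 1 := by rw [cross, ← hab]; ring
  rw [← ofVec_vec x]
  exact adj_ofVec (by rw [hcross, abs_one])

lemma exists_adj_adj_ne {x y : Option ℚ} (hxy : fareyGraph.Adj x y) (z : Option ℚ) :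
    ∃ w, w ≠ z ∧ fareyGraph.Adj x w ∧ fareyGraph.Adj y w := by
  rw [fareyGraph_adj_iff] at hxy
  rw [← ofVec_vec x, ← ofVec_vec y]
  set u := vec x
  set v := vec y
  have hne : ofVec (u + v) ≠ z ∨ ofVec (u - v) ≠ z := by
    by_contra! hz
    have h0 := cross_eq_zero_of_ofVec_eq (hz.1.trans hz.2.symm)
    have h2 : cross (u + v) (u - v) = -2 * cross u v := by
      simp only [cross, Prod.fst_add, Prod.snd_add, Prod.fst_sub, Prod.snd_sub]; ring
    rw [h2] at h0
    simp_all
  have hu_add : cross u (u + v) = cross u v := by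
    simp only [cross, Prod.fst_add, Prod.snd_add]; ring
  have hv_add : cross v (u + v) = -cross u v := by
    simp only [cross, Prod.fst_add, Prod.snd_add]; ring
  have hu_sub : cross u (u - v) = -cross u v := by
    simp only [cross, Prod.fst_sub, Prod.snd_sub]; ring
  have hv_sub : cross v (u - v) = -cross u v := by
    simp only [cross, Prod.fst_sub, Prod.snd_sub]; ring
  rcases hne with h | h
  · exact ⟨_, h, adj_ofVec (by rwa [hu_add]), adj_ofVec (by rwa [hv_add, abs_neg])⟩
  · exact ⟨_, h, adj_ofVec (by rwa [hu_sub, abs_neg]), adj_ofVec (by rwa [hv_sub, abs_neg])⟩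

end Farey

lemma exists_fareyTriangle_mem (x : Option ℚ) : ∃ T : FareyTriangle, x ∈ T.1 := by
  obtain ⟨y, hxy⟩ := Farey.exists_adj x
  obtain ⟨z, -, hxz, hyz⟩ := Farey.exists_adj_adj_ne hxy x
  exact ⟨⟨{x, y, z}, SimpleGraph.is3Clique_triple_iff.mpr ⟨hxy, hxz, hyz⟩⟩, by simp⟩

lemma exists_fareyDual_adj_mem {T : FareyTriangle} {x : Option ℚ} (hx : x ∈ T.1) :
    ∃ T', fareyDual.Adj T T' ∧ x ∈ T'.1 := by
  have hcard : (T.1.erase x).card = 2 := by rw [Finset.card_erase_of_mem hx, T.2.card_eq]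
  obtain ⟨b, c, hbc, herase⟩ := Finset.card_eq_two.mp hcard
  have hT : T.1 = {x, b, c} := by rw [← Finset.insert_erase hx, herase]
  have hxbc : x ∉ ({b, c} : Finset _) := herase ▸ Finset.notMem_erase x T.1
  simp only [Finset.mem_insert, Finset.mem_singleton, not_or] at hxbc
  have hxb : fareyGraph.Adj x b := T.2.isClique hx (by simp [hT]) hxbc.1
  obtain ⟨d, hdc, hxd, hbd⟩ := Farey.exists_adj_adj_ne hxb c
  have hcd : c ∉ ({x, b, d} : Finset _) := by
    simp [Ne.symm hxbc.2, Ne.symm hbc, Ne.symm hdc]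
  refine ⟨⟨{x, b, d}, SimpleGraph.is3Clique_triple_iff.mpr ⟨hxb, hxd, hbd⟩⟩, ⟨?_, ?_⟩, by simp⟩
  · intro h
    have h' : ({x, b, d} : Finset (Option ℚ)) = T.1 := congrArg Subtype.val h.symm
    exact hcd (by rw [h', hT]; simp)
  · rw [hT, Finset.insert_inter_of_mem (by simp), Finset.insert_inter_of_mem (by simp),
      Finset.singleton_inter_of_notMem hcd, Finset.insert_empty, Finset.card_pair hxbc.1]

namespace SimpleGraph

variable {V W : Type*} {G : SimpleGraph V} {G' : SimpleGraph W}

def HasTriangleFreeEdge (G : SimpleGraph V) (v : V) : Prop :=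
  ∃ u, G.Adj v u ∧ ∀ w, ¬(G.Adj v w ∧ G.Adj u w)

lemma Iso.hasTriangleFreeEdge_apply_iff (f : G ≃g G') (v : V) :
    G'.HasTriangleFreeEdge (f v) ↔ G.HasTriangleFreeEdge v := by
  simp only [HasTriangleFreeEdge, f.surjective.exists, f.surjective.forall, f.map_adj_iff]

lemma Iso.forall_adj_apply_iff (f : G ≃g G') {P : V → Prop} {P' : W → Prop}
    (h : ∀ v, P' (f v) ↔ P v) (v : V) :
    (∀ w, G'.Adj (f v) w → P' w) ↔ ∀ w, G.Adj v w → P w := by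
  simp only [f.surjective.forall, f.map_adj_iff, h]

end SimpleGraph

lemma modelGraph_no_common_adj_inl_inr (x : Option ℚ) (w : ModelVertex) :
    ¬(modelGraph.Adj (.inl x) w ∧ modelGraph.Adj (.inr (.inl x)) w) := by
  rintro ⟨h₁, h₂⟩
  rcases w with y | y | T
  · exact fareyGraph.ne_of_adj h₁ (h₂ : x = y)
  · exact h₂
  · exact h₁

lemma modelGraph_hasTriangleFreeEdge_inl (x : Option ℚ) :
    modelGraph.HasTriangleFreeEdge (.inl x) :=
  ⟨.inr (.inl x), rfl, modelGraph_no_common_adj_inl_inr x⟩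

lemma modelGraph_hasTriangleFreeEdge_inr_inl (x : Option ℚ) :
    modelGraph.HasTriangleFreeEdge (.inr (.inl x)) :=
  ⟨.inl x, rfl, fun w h => modelGraph_no_common_adj_inl_inr x w h.symm⟩

lemma modelGraph_not_hasTriangleFreeEdge_inr_inr (T : FareyTriangle) :
    ¬modelGraph.HasTriangleFreeEdge (.inr (.inr T)) := by
  rintro ⟨u | x | T', hadj, hno⟩
  · exact hadj
  · obtain ⟨T', hTT', hx⟩ := exists_fareyDual_adj_mem (hadj : x ∈ T.1)
    exact hno (.inr (.inr T')) ⟨hTT', hx⟩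
  · obtain ⟨x, hx⟩ := Finset.card_pos.mp ((hadj : fareyDual.Adj T T').2 ▸ two_pos)
    exact hno (.inr (.inl x)) (Finset.mem_inter.mp hx)

lemma modelGraph_not_hasTriangleFreeEdge_iff (v : ModelVertex) :
    ¬modelGraph.HasTriangleFreeEdge v ↔ ∃ T, v = .inr (.inr T) := by
  rcases v with x | x | T
  · simp [modelGraph_hasTriangleFreeEdge_inl]
  · simp [modelGraph_hasTriangleFreeEdge_inr_inl]
  · simp [modelGraph_not_hasTriangleFreeEdge_inr_inr]

lemma modelGraph_hasTriangleFreeEdge_and_forall_adj_iff (v : ModelVertex) :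
    (modelGraph.HasTriangleFreeEdge v ∧
      ∀ w, modelGraph.Adj v w → modelGraph.HasTriangleFreeEdge w) ↔ ∃ x, v = .inl x := by
  rcases v with x | x | T
  · refine iff_of_true ⟨modelGraph_hasTriangleFreeEdge_inl x, ?_⟩ ⟨x, rfl⟩
    rintro (y | y | T) h
    · exact modelGraph_hasTriangleFreeEdge_inl y
    · exact modelGraph_hasTriangleFreeEdge_inr_inl y
    · exact h.elim
  · refine iff_of_false (fun h => ?_) (by simp)
    obtain ⟨T, hT⟩ := exists_fareyTriangle_mem x
    exact modelGraph_not_hasTriangleFreeEdge_inr_inr T (h.2 (.inr (.inr T)) hT)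
  · exact iff_of_false (fun h => modelGraph_not_hasTriangleFreeEdge_inr_inr T h.1) (by simp)

/-- Every graph automorphism of the model graph `G` preserves its three classes of
vertices: Farey vertices go to Farey vertices, dual vertices to dual vertices, and
triangle-vertices to triangle-vertices. -/
theorem modelGraph_aut_preserves_vertex_classes (f : modelGraph ≃g modelGraph) :
    (∀ x : Option ℚ, ∃ y : Option ℚ, f (.inl x) = .inl y) ∧
    (∀ x : Option ℚ, ∃ y : Option ℚ, f (.inr (.inl x)) = .inr (.inl y)) ∧
    (∀ T : FareyTriangle, ∃ T' : FareyTriangle,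
      f (.inr (.inr T)) = .inr (.inr T')) := by
  have htri (v : ModelVertex) := not_congr (f.hasTriangleFreeEdge_apply_iff v)
  have hfarey (v : ModelVertex) := and_congr (f.hasTriangleFreeEdge_apply_iff v)
    (f.forall_adj_apply_iff f.hasTriangleFreeEdge_apply_iff v)
  simp only [modelGraph_not_hasTriangleFreeEdge_iff] at htri
  simp only [modelGraph_hasTriangleFreeEdge_and_forall_adj_iff] at hfarey
  refine ⟨fun x => (hfarey _).2 ⟨x, rfl⟩, fun x => ?_, fun T => (htri _).2 ⟨T, rfl⟩⟩
  rcases h : f (.inr (.inl x)) with y | y | T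
  · obtain ⟨z, hz⟩ := (hfarey _).1 ⟨y, h⟩
    cases hz
  · exact ⟨y, rfl⟩
  · obtain ⟨T', hT'⟩ := (htri _).1 ⟨T, h⟩
    cases hT'
end

section
/- For every vertex x of the Farey graph 𝔽, the subgraph of the model graph G induced on the set {x̃} ∪ {T : T is a triangle of 𝔽 with x ∈ T} is isomorphic to the infinite fan graph F∞, via an isomorphism taking x̃ to the centre of F∞. -/
/-- Adjacency relation of the infinite fan graph on `Option ℤ`. -/
def fanAdj : Option ℤ → Option ℤ → Prop
  | some i, some j => |i - j| = 1
  | some _, none => True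
  | none, some _ => True
  | none, none => False

/-- The infinite fan graph `F∞`: the centre `none` is adjacent to every `some i`,
and `some i` is adjacent to `some j` iff `|i - j| = 1`. -/
def fanGraph : SimpleGraph (Option ℤ) where
  Adj := fanAdj
  symm := by
    constructor
    rintro (_ | i) (_ | j) h
    · exact h.elim
    · trivial
    · trivial
    · show |j - i| = 1
      rw [abs_sub_comm]
      exact h
  loopless := by
    constructor
    rintro (_ | i) h
    · exact h.elim
    · have : |i - i| = 1 := h
      simp at this

/-! Write Farey vertices in primitive homogeneous coordinates, `p / q ↦ (p, q)` and `∞ ↦ (1, 0)`,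
so that adjacency means `|det| = 1`. Completing `x = (p, q)` to a unimodular basis `(a, b), (p, q)`,
the neighbours of `x` are exactly the points `y t = (a + t p, b + t q)`, `t ∈ ℤ`, and
`|det (y s) (y t)| = |t - s|`. Hence the triangles through `x` are the `{x, y t, y (t + 1)}`, two of
them share an edge iff their indices are consecutive, and `x̃` is joined to all of them: a fan. -/

namespace Farey

def num : Option ℚ → ℤ
  | none => 1
  | some r => r.num

def den : Option ℚ → ℤ
  | none => 0
  | some r => r.den

def det (u v : Option ℚ) : ℤ := num u * den v - num v * den u

theorem det_self (u : Option ℚ) : det u u = 0 := by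
  rw [det, sub_self]

theorem adj_iff_abs_det {u v : Option ℚ} : fareyGraph.Adj u v ↔ |det u v| = 1 := by
  rcases u with _ | r <;> rcases v with _ | r'
  · simp [fareyGraph, det, num, den]
  · change r'.den = 1 ↔ _
    simp [det, num, den]
  · change r.den = 1 ↔ _
    simp [det, num, den]
  · rfl

theorem isCoprime_num_den (u : Option ℚ) : IsCoprime (num u) (den u) := by
  rcases u with _ | r
  · exact isCoprime_one_left
  · exact Int.isCoprime_iff_nat_coprime.mpr r.reduced

def ofCoords (A B : ℤ) : Option ℚ := if B = 0 then none else some (A / B)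

theorem ofCoords_num_den (u : Option ℚ) : ofCoords (num u) (den u) = u := by
  rcases u with _ | r
  · simp [ofCoords, den]
  · simp [ofCoords, num, den, r.den_nz, Rat.num_div_den]

theorem ofCoords_neg (A B : ℤ) : ofCoords (-A) (-B) = ofCoords A B := by
  by_cases hB : B = 0
  · simp [ofCoords, hB]
  · simp [ofCoords, hB, neg_div_neg_eq]

theorem exists_abs_eq_one_coords_ofCoords {A B : ℤ} (h : IsCoprime A B) :
    ∃ σ : ℤ, |σ| = 1 ∧ num (ofCoords A B) = σ * A ∧ den (ofCoords A B) = σ * B := by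
  by_cases hB : B = 0
  · subst hB
    have hA : |A| = 1 := Int.isUnit_iff_abs_eq.mp (isCoprime_zero_right.mp h)
    refine ⟨A, hA, ?_, by simp [ofCoords, den]⟩
    rw [← abs_mul_abs_self, hA]
    simp [ofCoords, num]
  · -- normalise the sign of the denominator
    have hpos : 0 < B.sign * B := by rw [Int.sign_mul_self_eq_abs]; positivity
    have hcop : (B.sign * A).natAbs.Coprime (B.sign * B).natAbs := by
      simpa [Int.natAbs_mul, Int.natAbs_sign_of_ne_zero hB, Int.sign_mul_self_eq_abs,
        Int.natAbs_abs] using Int.isCoprime_iff_nat_coprime.mp h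
    have hdiv : (A / B : ℚ) = ((B.sign * A : ℤ) : ℚ) / ((B.sign * B : ℤ) : ℚ) := by
      push_cast
      rw [mul_div_mul_left]
      exact_mod_cast mt Int.sign_eq_zero_iff_zero.mp hB
    refine ⟨B.sign, Int.abs_sign_of_ne_zero hB, ?_, ?_⟩
    · simp only [ofCoords, if_neg hB, num, hdiv, Rat.num_div_eq_of_coprime hpos hcop]
    · simp only [ofCoords, if_neg hB, den, hdiv, Rat.den_div_eq_of_coprime hpos hcop]

section Link

variable {x : Option ℚ} {a b : ℤ}

variable (x a b) in
def neighbor (t : ℤ) : Option ℚ := ofCoords (a + t * num x) (b + t * den x)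

theorem exists_coords_neighbor (hab : a * den x - b * num x = 1) (t : ℤ) :
    ∃ σ : ℤ, |σ| = 1 ∧ num (neighbor x a b t) = σ * (a + t * num x) ∧
      den (neighbor x a b t) = σ * (b + t * den x) :=
  exists_abs_eq_one_coords_ofCoords ⟨den x, -num x, by linear_combination hab⟩

theorem abs_det_neighbor (hab : a * den x - b * num x = 1) (s t : ℤ) :
    |det (neighbor x a b s) (neighbor x a b t)| = |t - s| := by
  obtain ⟨σ, hσ, hn, hd⟩ := exists_coords_neighbor hab s
  obtain ⟨τ, hτ, hn', hd'⟩ := exists_coords_neighbor hab t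
  have : det (neighbor x a b s) (neighbor x a b t) = σ * τ * (t - s) := by
    rw [det, hn, hd, hn', hd']
    linear_combination σ * τ * (t - s) * hab
  rw [this, abs_mul, abs_mul, hσ, hτ, one_mul, one_mul]

theorem adj_neighbor (hab : a * den x - b * num x = 1) (t : ℤ) :
    fareyGraph.Adj x (neighbor x a b t) := by
  obtain ⟨σ, hσ, hn, hd⟩ := exists_coords_neighbor hab t
  have : det x (neighbor x a b t) = -σ := by
    rw [det, hn, hd]
    linear_combination -σ * hab
  rw [adj_iff_abs_det, this, abs_neg, hσ]

theorem neighbor_adj_neighbor_iff (hab : a * den x - b * num x = 1) {s t : ℤ} :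
    fareyGraph.Adj (neighbor x a b s) (neighbor x a b t) ↔ |t - s| = 1 := by
  rw [adj_iff_abs_det, abs_det_neighbor hab]

theorem neighbor_injective (hab : a * den x - b * num x = 1) :
    Function.Injective (neighbor x a b) := by
  intro s t hst
  have h := abs_det_neighbor hab s t
  rw [hst, det_self, abs_zero, eq_comm, abs_eq_zero, sub_eq_zero] at h
  exact h.symm

theorem exists_neighbor_eq (hab : a * den x - b * num x = 1) {z : Option ℚ}
    (hz : fareyGraph.Adj x z) : ∃ t, neighbor x a b t = z := by
  -- in the basis `(a, b), (p, q)`, `z = (m, n)` has coordinates `(-det x z, a n - b m)`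
  rw [adj_iff_abs_det, abs_eq zero_le_one, det] at hz
  rcases hz with hz | hz
  · have hA : a + (b * num z - a * den z) * num x = -num z := by
      linear_combination (-a) * hz - num z * hab
    have hB : b + (b * num z - a * den z) * den x = -den z := by
      linear_combination (-b) * hz - den z * hab
    exact ⟨_, by rw [neighbor, hA, hB, ofCoords_neg, ofCoords_num_den]⟩
  · have hA : a + (a * den z - b * num z) * num x = num z := by
      linear_combination a * hz + num z * hab
    have hB : b + (a * den z - b * num z) * den x = den z := by
      linear_combination b * hz + den z * hab
    exact ⟨_, by rw [neighbor, hA, hB, ofCoords_num_den]⟩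

variable (x a b) in
def triangle (t : ℤ) : Finset (Option ℚ) := {x, neighbor x a b t, neighbor x a b (t + 1)}

theorem triangle_eq_insert_image_Icc (t : ℤ) :
    triangle x a b t = insert x ((Finset.Icc t (t + 1)).image (neighbor x a b)) := by
  have : Finset.Icc t (t + 1) = {t, t + 1} := by
    ext; simp only [Finset.mem_Icc, Finset.mem_insert, Finset.mem_singleton]; omega
  rw [triangle, this, Finset.image_insert, Finset.image_singleton]

theorem isNClique_triangle (hab : a * den x - b * num x = 1) (t : ℤ) :
    fareyGraph.IsNClique 3 (triangle x a b t) := by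
  rw [triangle, SimpleGraph.is3Clique_triple_iff]
  exact ⟨adj_neighbor hab t, adj_neighbor hab (t + 1),
    neighbor_adj_neighbor_iff hab |>.mpr (by simp)⟩

theorem card_triangle_inter_triangle (hab : a * den x - b * num x = 1) (s t : ℤ) :
    (triangle x a b s ∩ triangle x a b t).card = 1 + (2 - (s - t).natAbs) := by
  have hIcc :
      Finset.Icc s (s + 1) ∩ Finset.Icc t (t + 1) = Finset.Icc (max s t) (min s t + 1) := by
    ext; simp only [Finset.mem_inter, Finset.mem_Icc]; omega
  have hx : x ∉ (Finset.Icc (max s t) (min s t + 1)).image (neighbor x a b) := by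
    simp only [Finset.mem_image, not_exists, not_and]
    exact fun u _ => (adj_neighbor hab u).ne'
  rw [triangle_eq_insert_image_Icc, triangle_eq_insert_image_Icc, ← Finset.insert_inter_distrib,
    ← Finset.image_inter _ _ (neighbor_injective hab), hIcc, Finset.card_insert_of_notMem hx,
    Finset.card_image_of_injective _ (neighbor_injective hab), Int.card_Icc]
  omega

theorem triangle_injective (hab : a * den x - b * num x = 1) :
    Function.Injective (triangle x a b) := by
  intro s t hst
  have h := card_triangle_inter_triangle hab s t
  rw [hst, Finset.inter_self, (isNClique_triangle hab t).card_eq] at h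
  omega

theorem exists_triangle_eq (hab : a * den x - b * num x = 1) {T : Finset (Option ℚ)}
    (hT : fareyGraph.IsNClique 3 T) (hxT : x ∈ T) : ∃ t, triangle x a b t = T := by
  obtain ⟨c, d, hcd, hT'⟩ : ∃ c d, c ≠ d ∧ T.erase x = {c, d} := by
    rw [← Finset.card_eq_two, Finset.card_erase_of_mem hxT, hT.card_eq]
  have hmem : ∀ {y}, y ∈ ({c, d} : Finset (Option ℚ)) → y ≠ x ∧ y ∈ T := by
    intro y hy
    rwa [← hT', Finset.mem_erase] at hy
  have hadj : ∀ {y z}, y ∈ T → z ∈ T → y ≠ z → fareyGraph.Adj y z :=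
    fun hy hz => hT.isClique hy hz
  have hc := hmem (y := c) (by simp)
  have hd := hmem (y := d) (by simp)
  obtain ⟨s, rfl⟩ := exists_neighbor_eq hab (hadj hxT hc.2 hc.1.symm)
  obtain ⟨t, rfl⟩ := exists_neighbor_eq hab (hadj hxT hd.2 hd.1.symm)
  have hst := (neighbor_adj_neighbor_iff hab).mp (hadj hc.2 hd.2 hcd)
  refine ⟨min s t, ?_⟩
  have : Finset.Icc (min s t) (min s t + 1) = {s, t} := by
    rw [Int.abs_eq_natAbs] at hst
    ext; simp only [Finset.mem_Icc, Finset.mem_insert, Finset.mem_singleton]; omega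
  rw [triangle_eq_insert_image_Icc, this, Finset.image_insert, Finset.image_singleton, ← hT',
    Finset.insert_erase hxT]

end Link

theorem exists_equiv_triangles_mem (x : Option ℚ) :
    ∃ e : ℤ ≃ {T : FareyTriangle // x ∈ T.1},
      ∀ s t, fareyDual.Adj (e s).1 (e t).1 ↔ |s - t| = 1 := by
  obtain ⟨u, v, huv⟩ := isCoprime_num_den x
  have hab : v * den x - -u * num x = 1 := by linear_combination huv
  let f (t : ℤ) : {T : FareyTriangle // x ∈ T.1} :=
    ⟨⟨triangle x v (-u) t, isNClique_triangle hab t⟩, Finset.mem_insert_self _ _⟩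
  have hf : Function.Bijective f := by
    refine ⟨fun s t hst => triangle_injective hab (congrArg (fun T => T.1.1) hst), ?_⟩
    rintro ⟨T, hxT⟩
    obtain ⟨t, ht⟩ := exists_triangle_eq hab T.2 hxT
    exact ⟨t, Subtype.ext (Subtype.ext ht)⟩
  refine ⟨Equiv.ofBijective f hf, fun s t => ?_⟩
  change (f s).1 ≠ (f t).1 ∧ (triangle x v (-u) s ∩ triangle x v (-u) t).card = 2 ↔ _
  rw [card_triangle_inter_triangle hab, Int.abs_eq_natAbs]
  constructor
  · rintro ⟨-, h⟩
    omega
  · intro h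
    refine ⟨fun hst => ?_, by omega⟩
    have := triangle_injective hab (congrArg (fun T => T.1) hst)
    omega

end Farey

def modelStar (x : Option ℚ) : Set ModelVertex :=
  {v | v = .inr (.inl x) ∨ ∃ T : FareyTriangle, x ∈ T.1 ∧ v = .inr (.inr T)}

namespace modelStar

variable {x : Option ℚ}

def ofFan (e : ℤ → {T : FareyTriangle // x ∈ T.1}) : Option ℤ → modelStar x
  | none => ⟨.inr (.inl x), Or.inl rfl⟩
  | some t => ⟨.inr (.inr (e t).1), Or.inr ⟨_, (e t).2, rfl⟩⟩

theorem ofFan_bijective (e : ℤ ≃ {T : FareyTriangle // x ∈ T.1}) :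
    Function.Bijective (ofFan e) := by
  constructor
  · rintro (_ | s) (_ | t) h <;> replace h := congrArg Subtype.val h <;> simp [ofFan] at h ⊢
    exact e.injective (Subtype.ext h)
  · rintro ⟨v, rfl | ⟨T, hxT, rfl⟩⟩
    · exact ⟨none, rfl⟩
    · exact ⟨some (e.symm ⟨T, hxT⟩), by simp [ofFan]⟩

noncomputable def fanIso (e : ℤ ≃ {T : FareyTriangle // x ∈ T.1})
    (he : ∀ s t, fareyDual.Adj (e s).1 (e t).1 ↔ |s - t| = 1) :
    fanGraph ≃g modelGraph.induce (modelStar x) where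
  toEquiv := Equiv.ofBijective _ (ofFan_bijective e)
  map_rel_iff' {s t} := by
    rcases s with _ | s <;> rcases t with _ | t
    · exact Iff.rfl
    · exact iff_of_true (e t).2 trivial
    · exact iff_of_true (e s).2 trivial
    · exact he s t

end modelStar

/-- For every vertex `x` of the Farey graph, the subgraph of the model graph `G`
induced on `{x̃} ∪ {T : triangle of 𝔽 with x ∈ T}` is isomorphic to the infinite fan
graph `F∞`, via an isomorphism taking `x̃` to the centre of `F∞`. -/
theorem modelGraph_induced_fan (x : Option ℚ) :
    ∃ φ : (modelGraph.induce
        {v : ModelVertex | v = .inr (.inl x) ∨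
          ∃ T : FareyTriangle, x ∈ T.1 ∧ v = .inr (.inr T)}) ≃g fanGraph,
      ∀ h : (Sum.inr (Sum.inl x) : ModelVertex) ∈
          {v : ModelVertex | v = .inr (.inl x) ∨
            ∃ T : FareyTriangle, x ∈ T.1 ∧ v = .inr (.inr T)},
        φ ⟨.inr (.inl x), h⟩ = none := by
  obtain ⟨e, he⟩ := Farey.exists_equiv_triangles_mem x
  exact ⟨(modelStar.fanIso e he).symm, fun _ => (modelStar.fanIso e he).symm_apply_eq.mpr rfl⟩
end
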